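/- For every n, k ∈ ℕ with n ≥ 1, the map a ↦ f^a from {0,1,…,n−1}^k to the set of functions {0,1,…,n−1}^k → {0,1,…,n−1}^k is injective; consequently, the family F = { f^a : a ∈ {0,1,…,n−1}^k } consists of n^k distinct monotone functions, each having a unique fixed point. -/

import Mathlib

/-!
At the first coordinate `i` where `v` differs from `a`, all earlier coordinates agree with `a`, so
`f^a` moves `v i` one step towards `a i`. Hence `a` is the unique fixed point of `f^a`, which
recovers `a` from `f^a` and makes `a ↦ f^a` injective (even on all of `ℕ^k`); the count `n^k` is
then the size of the grid.
-/

/-- The function `f^a` from Definition 2 of the paper, defined coordinatewise: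
`f^a_i(v) = v_i - 1` if `v_i > a_i` and `v_j ≤ a_j` for all `j < i`;
`f^a_i(v) = v_i + 1` if `v_i < a_i` and `v_j ≥ a_j` for all `j < i`;
`f^a_i(v) = v_i` otherwise. -/
def tarskiF {k : ℕ} (a v : Fin k → ℕ) : Fin k → ℕ := fun i =>
  if a i < v i ∧ ∀ j, j < i → v j ≤ a j then v i - 1
  else if v i < a i ∧ ∀ j, j < i → a j ≤ v j then v i + 1
  else v i

section TarskiF

variable {k : ℕ}

theorem tarskiF_self (a : Fin k → ℕ) : tarskiF a a = a := by
  funext i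
  simp [tarskiF]

theorem eq_of_tarskiF_apply_eq {a v : Fin k → ℕ} {i : Fin k} (hbelow : ∀ j < i, v j = a j)
    (h : tarskiF a v i = v i) : v i = a i := by
  have hle : ∀ j < i, v j ≤ a j := fun j hj => (hbelow j hj).le
  have hge : ∀ j < i, a j ≤ v j := fun j hj => (hbelow j hj).ge
  unfold tarskiF at h
  split_ifs at h with hdec hinc
  · omega
  · omega
  · have : ¬ a i < v i := fun hlt => hdec ⟨hlt, hle⟩
    have : ¬ v i < a i := fun hlt => hinc ⟨hlt, hge⟩
    omega

theorem tarskiF_eq_self_iff {a v : Fin k → ℕ} : tarskiF a v = v ↔ v = a := by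
  refine ⟨fun h => funext fun i => ?_, fun h => h ▸ tarskiF_self a⟩
  induction i using WellFoundedLT.induction with
  | ind i ih => exact eq_of_tarskiF_apply_eq ih (congrFun h i)

theorem tarskiF_injective : Function.Injective (tarskiF (k := k)) := fun a b hab =>
  tarskiF_eq_self_iff.mp (hab ▸ tarskiF_self a : tarskiF b a = a)

theorem tarskiF_monotone (a : Fin k → ℕ) : Monotone (tarskiF a) := by
  intro u v huv i
  -- The prefix condition for stepping down passes from `v` to `u`, that for stepping up from `u`
  -- to `v`; the remaining cases are arithmetic.
  have hdown : (∀ j < i, v j ≤ a j) → ∀ j < i, u j ≤ a j :=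
    fun hv j hj => (huv j).trans (hv j hj)
  have hup : (∀ j < i, a j ≤ u j) → ∀ j < i, a j ≤ v j :=
    fun hu j hj => (hu j hj).trans (huv j)
  have := huv i
  unfold tarskiF
  split_ifs <;> grind

end TarskiF

theorem ncard_setOf_forall_lt {ι : Type*} [Fintype ι] [DecidableEq ι] (n : ℕ) :
    {a : ι → ℕ | ∀ i, a i < n}.ncard = n ^ Fintype.card ι := by
  have hgrid : {a : ι → ℕ | ∀ i, a i < n} = ↑(Fintype.piFinset fun _ : ι => Finset.range n) := by
    ext a
    simp
  rw [hgrid, Set.ncard_coe_finset, Fintype.card_piFinset]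
  simp

theorem tarskiF_family_injective_card_general (n k : ℕ) :
    Set.InjOn (fun a : Fin k → ℕ => tarskiF a) {a : Fin k → ℕ | ∀ i, a i < n} ∧
    Set.ncard {g : (Fin k → ℕ) → (Fin k → ℕ) |
        ∃ a : Fin k → ℕ, (∀ i, a i < n) ∧ g = tarskiF a} = n ^ k ∧
    (∀ a : Fin k → ℕ, (∀ i, a i < n) →
      (∀ u v : Fin k → ℕ, (∀ i, u i < n) → (∀ i, v i < n) → u ≤ v →
          tarskiF a u ≤ tarskiF a v) ∧
      (∀ v : Fin k → ℕ, (∀ i, v i < n) → (tarskiF a v = v ↔ v = a))) := by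
  have hfamily : {g : (Fin k → ℕ) → (Fin k → ℕ) |
      ∃ a : Fin k → ℕ, (∀ i, a i < n) ∧ g = tarskiF a} =
      tarskiF '' {a : Fin k → ℕ | ∀ i, a i < n} := by
    ext g
    exact exists_congr fun a => and_congr_right' eq_comm
  refine ⟨tarskiF_injective.injOn, ?_,
    fun a _ => ⟨fun u v _ _ huv => tarskiF_monotone a huv, fun v _ => tarskiF_eq_self_iff⟩⟩
  rw [hfamily, Set.ncard_image_of_injective _ tarskiF_injective, ncard_setOf_forall_lt,
    Fintype.card_fin]

/-- The map `a ↦ f^a` is injective on the grid `{0,…,n-1}^k`; consequently the family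
`F = { f^a : a ∈ {0,…,n-1}^k }` consists of `n^k` distinct functions, each monotone
and each having `a` as its unique fixed point on the grid. -/
theorem tarskiF_family_injective_card (n k : ℕ) (hn : 1 ≤ n) :
    Set.InjOn (fun a : Fin k → ℕ => tarskiF a) {a : Fin k → ℕ | ∀ i, a i < n} ∧
    Set.ncard {g : (Fin k → ℕ) → (Fin k → ℕ) |
        ∃ a : Fin k → ℕ, (∀ i, a i < n) ∧ g = tarskiF a} = n ^ k ∧
    (∀ a : Fin k → ℕ, (∀ i, a i < n) →
      (∀ u v : Fin k → ℕ, (∀ i, u i < n) → (∀ i, v i < n) → u ≤ v →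
          tarskiF a u ≤ tarskiF a v) ∧
      (∀ v : Fin k → ℕ, (∀ i, v i < n) → (tarskiF a v = v ↔ v = a))) :=
  tarskiF_family_injective_card_general n k
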